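/- Let D be the locally nilpotent ℂ-derivation of ℂ[X, Y, Z] given by D = −2Yσ·∂/∂X + Zσ·∂/∂Y with σ = XZ + Y², and let N = (exp(D)(X), exp(D)(Y), exp(D)(Z)) be the associated exponential automorphism of ℂ³ (the Nagata automorphism N = (X − 2Yσ − Zσ², Y + Zσ, Z)). Then the minimal polynomial of N is (T − 1)³: for each variable w ∈ {X, Y, Z}, Σ_{m=0}^{3} (−1)^m C(3,m) exp(mD)(w) = 0, and no nonzero polynomial p ∈ ℂ[T] of degree less than 3 satisfies Σ_m (coeff of T^m in p)·exp(mD)(w) = 0 for all w ∈ {X, Y, Z}. -/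

import Mathlib

/-!
Since `D σ = 0`, the derivation `D` kills each variable after three steps, so
`exp(mD)(w) = Σ_{i<3} (m^i / i!) D^i(w)` is a polynomial of degree `< 3` in `m` and its third
finite difference `Σ_m (-1)^m C(3,m) exp(mD)(w)` vanishes. Conversely, at the point `(1, 1, 1)`
the iterates `exp(mD)(X)`, `exp(mD)(Y)`, `exp(mD)(Z)` take the values `1 - 4m - 4m²`, `1 + 2m`
and `1`, which span the polynomials in `m` of degree `≤ 2`; hence a polynomial of degree `< 3`
annihilating `N` has vanishing coefficients.
-/

open Classical in
/-- The exponential `exp(D)(a) = Σ_{i=0}^{∞} (1/i!) • D^[i](a)` of a derivation `D`;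
for each `a` on which `D` is eventually nilpotent this is the (finite) sum of all
possibly nonzero terms. -/
noncomputable def expMap (k : Type*) {A : Type*} [Field k] [CharZero k] [CommRing A]
    [Algebra k A] (D : Derivation k A A) (a : A) : A :=
  if h : ∃ n : ℕ, (⇑D)^[n] a = 0 then
    ∑ i ∈ Finset.range (Nat.find h), ((Nat.factorial i : k)⁻¹) • (⇑D)^[i] a
  else a

open Finset MvPolynomial

theorem sum_range_alternating_choose_mul_pow_eq_zero {R : Type*} [CommRing R] {i n : ℕ}
    (h : i < n) : ∑ m ∈ range (n + 1), (-1 : R) ^ m * n.choose m * (m : R) ^ i = 0 := by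
  have hΔ := congr_fun (fwdDiff_iter_pow_eq_zero_of_lt (R := R) h) 0
  rw [fwdDiff_iter_eq_sum_shift] at hΔ
  simp only [zero_add, nsmul_eq_mul, mul_one, zsmul_eq_mul, Int.cast_mul, Int.cast_pow,
    Int.cast_neg, Int.cast_one, Int.cast_natCast, Pi.zero_apply] at hΔ
  calc ∑ m ∈ range (n + 1), (-1 : R) ^ m * n.choose m * (m : R) ^ i
      = (-1) ^ n * ∑ m ∈ range (n + 1), (-1 : R) ^ (n - m) * n.choose m * (m : R) ^ i := by
        rw [mul_sum]
        refine sum_congr rfl fun m hm => ?_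
        obtain ⟨j, rfl⟩ := Nat.exists_eq_add_of_le (Nat.lt_succ_iff.mp (mem_range.mp hm))
        rw [Nat.add_sub_cancel_left, pow_add]
        ring_nf
        rw [(show Even (j * 2) from ⟨j, by ring⟩).neg_one_pow, mul_one]
    _ = 0 := by rw [hΔ, mul_zero]

section Exponential

variable {k A : Type*} [Field k] [CommRing A] [Algebra k A]

theorem Derivation.iterate_nsmul_apply (D : Derivation k A A) (m i : ℕ) (a : A) :
    (⇑(m • D))^[i] a = ((m : k) ^ i) • (⇑D)^[i] a := by
  induction i with
  | zero => simp
  | succ i ih =>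
    rw [Function.iterate_succ_apply', ih, Derivation.smul_apply, ← Nat.cast_smul_eq_nsmul k,
      D.map_smul, smul_smul, Function.iterate_succ_apply', pow_succ']

variable [CharZero k]

open Classical in
theorem expMap_eq_sum_range (D : Derivation k A A) {a : A} {n : ℕ} (hn : (⇑D)^[n] a = 0) :
    expMap k D a = ∑ i ∈ range n, ((i.factorial : k)⁻¹) • (⇑D)^[i] a := by
  have h : ∃ n : ℕ, (⇑D)^[n] a = 0 := ⟨n, hn⟩
  rw [expMap, dif_pos h]
  refine sum_subset (range_subset_range.2 (Nat.find_min' h hn)) fun i _ hi => ?_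
  obtain ⟨j, rfl⟩ := Nat.exists_eq_add_of_le (not_lt.mp (mem_range.not.mp hi))
  rw [add_comm, Function.iterate_add_apply, Nat.find_spec h,
    Function.iterate_fixed (map_zero D), smul_zero]

theorem expMap_nsmul_eq_sum_range (D : Derivation k A A) (m : ℕ) {a : A} {n : ℕ}
    (hn : (⇑D)^[n] a = 0) :
    expMap k (m • D) a = ∑ i ∈ range n, ((m : k) ^ i / i.factorial) • (⇑D)^[i] a := by
  rw [expMap_eq_sum_range (m • D) (n := n) (by rw [D.iterate_nsmul_apply, hn, smul_zero])]
  simp_rw [D.iterate_nsmul_apply, smul_smul, div_eq_inv_mul]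

theorem sum_alternating_choose_smul_expMap_nsmul_eq_zero (D : Derivation k A A) {a : A} {n : ℕ}
    (hn : (⇑D)^[n] a = 0) :
    ∑ m ∈ range (n + 1), ((-1 : k) ^ m * n.choose m) • expMap k (m • D) a = 0 := by
  simp_rw [expMap_nsmul_eq_sum_range D _ hn, smul_sum, smul_smul]
  rw [sum_comm]
  refine sum_eq_zero fun i hi => ?_
  rw [← sum_smul]
  convert zero_smul k ((⇑D)^[i] a)
  simp_rw [mul_div_assoc', ← sum_div, sum_range_alternating_choose_mul_pow_eq_zero
    (mem_range.mp hi), zero_div]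

end Exponential

section Nagata

variable (k : Type*)

section

variable [CommRing k]

noncomputable def nagataSigma : MvPolynomial (Fin 3) k := X 0 * X 2 + X 1 ^ 2

noncomputable def nagataDerivation :
    Derivation k (MvPolynomial (Fin 3) k) (MvPolynomial (Fin 3) k) :=
  mkDerivation k ![-2 * X 1 * nagataSigma k, X 2 * nagataSigma k, 0]

local notation "N" => nagataDerivation k
local notation "σ" => nagataSigma k

variable {k}

@[simp] theorem nagataDerivation_X_zero : N (X 0) = -2 * X 1 * σ := mkDerivation_X _ _ _

@[simp] theorem nagataDerivation_X_one : N (X 1) = X 2 * σ := mkDerivation_X _ _ _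

@[simp] theorem nagataDerivation_X_two : N (X 2) = 0 := mkDerivation_X _ _ _

@[simp] theorem nagataDerivation_nagataSigma : N σ = 0 := by
  conv_lhs => rw [nagataSigma]
  simp only [map_add, Derivation.leibniz, Derivation.leibniz_pow, nagataDerivation_X_zero,
    nagataDerivation_X_one, nagataDerivation_X_two, smul_eq_mul, nsmul_eq_mul]
  ring

theorem nagataDerivation_iterate_two_X_zero : (⇑N)^[2] (X 0) = -2 * X 2 * σ ^ 2 := by
  have h2 : N 2 = 0 := (nagataDerivation k).map_natCast 2
  simp [Function.iterate_succ_apply', Derivation.leibniz, h2]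
  ring

theorem nagataDerivation_iterate_three_X (i : Fin 3) : (⇑N)^[3] (X i) = 0 := by
  have h2 : N 2 = 0 := (nagataDerivation k).map_natCast 2
  fin_cases i <;> simp [Function.iterate_succ_apply', Derivation.leibniz, h2]

end

variable {k} [Field k] [CharZero k]

local notation "N" => nagataDerivation k
local notation "σ" => nagataSigma k

theorem expMap_nsmul_nagataDerivation_X_zero (m : ℕ) :
    expMap k (m • N) (X 0) =
      X 0 - 2 * (m : MvPolynomial (Fin 3) k) * X 1 * σ
        - (m : MvPolynomial (Fin 3) k) ^ 2 * X 2 * σ ^ 2 := by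
  rw [expMap_nsmul_eq_sum_range _ m (nagataDerivation_iterate_three_X 0)]
  have half : C ((m : k) ^ 2 / 2) * 2 = (m : MvPolynomial (Fin 3) k) ^ 2 := by
    rw [← map_ofNat C 2, ← C_mul, div_mul_cancel₀ _ two_ne_zero, map_pow, map_natCast]
  simp [sum_range_succ, nagataDerivation_iterate_two_X_zero, smul_eq_C_mul]
  linear_combination (-(X 2 * σ ^ 2)) * half

theorem expMap_nsmul_nagataDerivation_X_one (m : ℕ) :
    expMap k (m • N) (X 1) = X 1 + (m : MvPolynomial (Fin 3) k) * X 2 * σ := by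
  rw [expMap_nsmul_eq_sum_range _ m (nagataDerivation_iterate_three_X 1)]
  simp [sum_range_succ, smul_eq_C_mul, Function.iterate_succ_apply', Derivation.leibniz]
  ring

theorem expMap_nsmul_nagataDerivation_X_two (m : ℕ) :
    expMap k (m • N) (X 2) = X 2 := by
  rw [expMap_nsmul_eq_sum_range _ m (nagataDerivation_iterate_three_X 2)]
  simp [sum_range_succ]

theorem eq_zero_of_forall_sum_coeff_smul_expMap_nsmul_nagataDerivation_X_eq_zero
    {p : Polynomial k} (hp : p.natDegree < 3)
    (h : ∀ i : Fin 3, ∑ m ∈ range (p.natDegree + 1),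
      p.coeff m • expMap k (m • N) (X i) = 0) :
    p = 0 := by
  have key (i : Fin 3) :
      ∑ m ∈ range 3, p.coeff m * eval 1 (expMap k (m • N) (X i)) = 0 := by
    have hi := congrArg (eval 1) (h i)
    simp only [map_sum, smul_eval, map_zero] at hi
    rwa [← p.sum_over_range (f := fun m c => c * eval 1 (expMap k (m • N) (X i)))
      (by simp), p.sum_over_range' (by simp) 3 hp] at hi
  have k0 := key 0
  have k1 := key 1
  have k2 := key 2
  simp [sum_range_succ, expMap_nsmul_nagataDerivation_X_zero, expMap_nsmul_nagataDerivation_X_one,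
    expMap_nsmul_nagataDerivation_X_two, nagataSigma] at k0 k1 k2
  have c2 : p.coeff 2 = 0 := by linear_combination -((k0 - k2) + 4 * (k1 - k2)) / 8
  have c1 : p.coeff 1 = 0 := by linear_combination (k1 - k2) / 2 - 2 * c2
  have c0 : p.coeff 0 = 0 := by linear_combination k2 - c1 - c2
  ext n
  rw [Polynomial.coeff_zero]
  rcases lt_or_ge n 3 with hn | hn
  · interval_cases n <;> assumption
  · exact Polynomial.coeff_eq_zero_of_natDegree_lt (hp.trans_le hn)

end Nagata

open MvPolynomial in
theorem nagata_minimal_polynomial_general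
    (D : Derivation ℂ (MvPolynomial (Fin 3) ℂ) (MvPolynomial (Fin 3) ℂ))
    (σ : MvPolynomial (Fin 3) ℂ) (hσ : σ = X 0 * X 2 + X 1 ^ 2)
    (hX : D (X 0) = -2 * X 1 * σ)
    (hY : D (X 1) = X 2 * σ)
    (hZ : D (X 2) = 0) :
    (∀ i : Fin 3,
        ∑ m ∈ Finset.range 4,
          ((-1 : ℂ) ^ m * (Nat.choose 3 m : ℂ)) • expMap ℂ (m • D) (X i) = 0) ∧
      ∀ p : Polynomial ℂ, p ≠ 0 → p.natDegree < 3 →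
        ∃ i : Fin 3,
          ∑ m ∈ Finset.range (p.natDegree + 1),
            p.coeff m • expMap ℂ (m • D) (X i) ≠ 0 := by
  obtain rfl : σ = nagataSigma ℂ := hσ
  obtain rfl : D = nagataDerivation ℂ :=
    derivation_ext fun i => by fin_cases i <;> simp [hX, hY, hZ]
  refine ⟨fun i => sum_alternating_choose_smul_expMap_nsmul_eq_zero _
    (nagataDerivation_iterate_three_X i), fun p hp hdeg => ?_⟩
  by_contra! h
  exact hp (eq_zero_of_forall_sum_coeff_smul_expMap_nsmul_nagataDerivation_X_eq_zero hdeg h)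

open MvPolynomial in
/-- The minimal polynomial of the Nagata automorphism `N = exp(D)` of `ℂ³`, where
`D = −2Yσ ∂/∂X + Zσ ∂/∂Y` with `σ = XZ + Y²`, is `(T − 1)³`: the alternating sum
`Σ_{m=0}^{3} (−1)^m C(3,m) exp(mD)(w)` vanishes on each variable `w`, while no
nonzero polynomial of degree `< 3` annihilates `N`. -/
theorem nagata_minimal_polynomial
    (D : Derivation ℂ (MvPolynomial (Fin 3) ℂ) (MvPolynomial (Fin 3) ℂ))
    (σ : MvPolynomial (Fin 3) ℂ) (hσ : σ = X 0 * X 2 + X 1 ^ 2)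
    (hX : D (X 0) = -2 * X 1 * σ)
    (hY : D (X 1) = X 2 * σ)
    (hZ : D (X 2) = 0)
    (hD : ∀ a : MvPolynomial (Fin 3) ℂ, ∃ n : ℕ, (⇑D)^[n] a = 0) :
    (∀ i : Fin 3,
        ∑ m ∈ Finset.range 4,
          ((-1 : ℂ) ^ m * (Nat.choose 3 m : ℂ)) • expMap ℂ (m • D) (X i) = 0) ∧
      ∀ p : Polynomial ℂ, p ≠ 0 → p.natDegree < 3 →
        ∃ i : Fin 3,
          ∑ m ∈ Finset.range (p.natDegree + 1),
            p.coeff m • expMap ℂ (m • D) (X i) ≠ 0 :=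
  nagata_minimal_polynomial_general D σ hσ hX hY hZ
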